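/- For all n > 3, the graceful chromatic number of the open ladder OL_n equals 5. -/
import Mathlib


/-- A graceful `k`-coloring of `G`: a proper vertex coloring with colors in
`{1, ..., k}` whose induced edge coloring `f*(uv) = |f u - f v|` is a proper
edge coloring. -/
def IsGracefulColoring {V : Type*} (G : SimpleGraph V) (k : ℕ) (f : V → ℕ) : Prop :=
  (∀ v, 1 ≤ f v ∧ f v ≤ k) ∧
  (∀ ⦃u v⦄, G.Adj u v → f u ≠ f v) ∧
  (∀ ⦃u v w⦄, G.Adj u v → G.Adj u w → v ≠ w →
    ((f u : ℤ) - f v).natAbs ≠ ((f u : ℤ) - f w).natAbs)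

/-- The graceful chromatic number: the least `k` admitting a graceful `k`-coloring. -/
noncomputable def gracefulChromaticNumber {V : Type*} (G : SimpleGraph V) : ℕ :=
  sInf {k | ∃ f : V → ℕ, IsGracefulColoring G k f}

/-- The closed ladder `L_n`: vertices `(r, i)` with rows `r = 0` (the `x_i`) and
`r = 1` (the `y_i`); rail edges `x_i x_{i+1}`, `y_i y_{i+1}` and rung edges `x_i y_i`. -/
def closedLadder (n : ℕ) : SimpleGraph (Fin 2 × Fin n) :=
  SimpleGraph.fromRel (fun a b =>
    (a.1 = b.1 ∧ a.2.val + 1 = b.2.val) ∨ (a.2 = b.2 ∧ a.1 ≠ b.1))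

/-- The open ladder `OL_n`: the closed ladder with the first and last rungs removed. -/
def openLadder (n : ℕ) : SimpleGraph (Fin 2 × Fin n) :=
  SimpleGraph.fromRel (fun a b =>
    (a.1 = b.1 ∧ a.2.val + 1 = b.2.val) ∨
    (a.2 = b.2 ∧ a.1 ≠ b.1 ∧ 0 < a.2.val ∧ a.2.val < n - 1))

/- ## Auxiliary: periodic coloring -/

def gL : ℕ → ℕ
  | 0 => 1
  | 1 => 2
  | 2 => 4
  | 3 => 5
  | m + 4 => gL m

lemma gL_quad (m : ℕ) :
    (gL m = 1 ∧ gL (m+1) = 2 ∧ gL (m+2) = 4 ∧ gL (m+3) = 5) ∨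
    (gL m = 2 ∧ gL (m+1) = 4 ∧ gL (m+2) = 5 ∧ gL (m+3) = 1) ∨
    (gL m = 4 ∧ gL (m+1) = 5 ∧ gL (m+2) = 1 ∧ gL (m+3) = 2) ∨
    (gL m = 5 ∧ gL (m+1) = 1 ∧ gL (m+2) = 2 ∧ gL (m+3) = 4) := by
  induction m with
  | zero => left; exact ⟨rfl, rfl, rfl, rfl⟩
  | succ m ih =>
    have h4 : gL (m + 4) = gL m := by simp [gL]
    rcases ih with ⟨h0,h1,h2,h3⟩|⟨h0,h1,h2,h3⟩|⟨h0,h1,h2,h3⟩|⟨h0,h1,h2,h3⟩ <;>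
      simp_all [show m+1+1 = m+2 from rfl, show m+1+2 = m+3 from rfl,
        show m+1+3 = m+4 from rfl]

lemma gL_mem (m : ℕ) : gL m = 1 ∨ gL m = 2 ∨ gL m = 4 ∨ gL m = 5 := by
  rcases gL_quad m with ⟨h,-⟩|⟨h,-⟩|⟨h,-⟩|⟨h,-⟩ <;> omega

lemma gN1 (m : ℕ) : gL m ≠ gL (m+1) := by
  rcases gL_quad m with ⟨h0,h1,-⟩|⟨h0,h1,-⟩|⟨h0,h1,-⟩|⟨h0,h1,-⟩ <;> omega

lemma gN2 (m : ℕ) : gL m ≠ gL (m+2) := by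
  rcases gL_quad m with ⟨h0,-,h2,-⟩|⟨h0,-,h2,-⟩|⟨h0,-,h2,-⟩|⟨h0,-,h2,-⟩ <;> omega

lemma gD1 (m : ℕ) :
    ((gL (m+1) : ℤ) - gL m).natAbs ≠ ((gL (m+1) : ℤ) - gL (m+2)).natAbs := by
  rcases gL_quad m with ⟨h0,h1,h2,h3⟩|⟨h0,h1,h2,h3⟩|⟨h0,h1,h2,h3⟩|⟨h0,h1,h2,h3⟩ <;>
    rw [h0, h1, h2] <;> decide

lemma gD2 (m : ℕ) :
    ((gL (m+1) : ℤ) - gL m).natAbs ≠ ((gL (m+1) : ℤ) - gL (m+3)).natAbs := by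
  rcases gL_quad m with ⟨h0,h1,h2,h3⟩|⟨h0,h1,h2,h3⟩|⟨h0,h1,h2,h3⟩|⟨h0,h1,h2,h3⟩ <;>
    rw [h0, h1, h3] <;> decide

lemma gD3 (m : ℕ) :
    ((gL (m+1) : ℤ) - gL (m+2)).natAbs ≠ ((gL (m+1) : ℤ) - gL (m+3)).natAbs := by
  rcases gL_quad m with ⟨h0,h1,h2,h3⟩|⟨h0,h1,h2,h3⟩|⟨h0,h1,h2,h3⟩|⟨h0,h1,h2,h3⟩ <;>
    rw [h1, h2, h3] <;> decide

lemma gE2 (m : ℕ) :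
    ((gL (m+2) : ℤ) - gL (m+1)).natAbs ≠ ((gL (m+2) : ℤ) - gL m).natAbs := by
  rcases gL_quad m with ⟨h0,h1,h2,h3⟩|⟨h0,h1,h2,h3⟩|⟨h0,h1,h2,h3⟩|⟨h0,h1,h2,h3⟩ <;>
    rw [h0, h1, h2] <;> decide

lemma gE3 (m : ℕ) :
    ((gL (m+2) : ℤ) - gL (m+3)).natAbs ≠ ((gL (m+2) : ℤ) - gL m).natAbs := by
  rcases gL_quad m with ⟨h0,h1,h2,h3⟩|⟨h0,h1,h2,h3⟩|⟨h0,h1,h2,h3⟩|⟨h0,h1,h2,h3⟩ <;>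
    rw [h0, h2, h3] <;> decide

/- ## Adjacency analysis -/

lemma openLadder_adj {n : ℕ} {u v : Fin 2 × Fin n} (h : (openLadder n).Adj u v) :
    (v.1.val = u.1.val ∧ v.2.val = u.2.val + 1) ∨
    (v.1.val = u.1.val ∧ u.2.val = v.2.val + 1) ∨
    (v.2.val = u.2.val ∧ v.1.val ≠ u.1.val ∧ 0 < u.2.val ∧ u.2.val < n - 1) := by
  rw [openLadder, SimpleGraph.fromRel_adj] at h
  obtain ⟨-, h | h⟩ := h <;> rcases h with ⟨h1, h2⟩ | ⟨h1, h2, h3, h4⟩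
  · exact Or.inl ⟨(congrArg Fin.val h1).symm, h2.symm⟩
  · refine Or.inr (Or.inr ⟨(congrArg Fin.val h1).symm, ?_, ?_, ?_⟩)
    · exact fun hh => h2 (Fin.ext hh.symm)
    · omega
    · omega
  · exact Or.inr (Or.inl ⟨congrArg Fin.val h1, h2.symm⟩)
  · have hv := congrArg Fin.val h1
    refine Or.inr (Or.inr ⟨hv, fun hh => h2 (Fin.ext hh), ?_, ?_⟩) <;> omega

lemma adj_rail {n : ℕ} (r : Fin 2) (i : ℕ) (h : i + 1 < n) :
    (openLadder n).Adj (r, ⟨i, by omega⟩) (r, ⟨i + 1, h⟩) := by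
  rw [openLadder, SimpleGraph.fromRel_adj]
  refine ⟨?_, Or.inl (Or.inl ⟨rfl, rfl⟩)⟩
  simp [Prod.ext_iff, Fin.ext_iff]

lemma adj_rung {n : ℕ} (i : ℕ) (h1 : 0 < i) (h2 : i < n - 1) (hin : i < n) :
    (openLadder n).Adj ((0 : Fin 2), ⟨i, hin⟩) ((1 : Fin 2), ⟨i, hin⟩) := by
  rw [openLadder, SimpleGraph.fromRel_adj]
  constructor
  · simp [Prod.ext_iff]
  · exact Or.inl (Or.inr ⟨rfl, by simp, h1, h2⟩)

/- ## Upper bound: explicit graceful 5-coloring -/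

lemma upper_coloring (n : ℕ) :
    IsGracefulColoring (openLadder n) 5 (fun p => gL (p.2.val + 2 * p.1.val)) := by
  refine ⟨?_, ?_, ?_⟩
  · intro v
    have := gL_mem (v.2.val + 2 * v.1.val)
    show 1 ≤ gL (v.2.val + 2 * v.1.val) ∧ gL (v.2.val + 2 * v.1.val) ≤ 5
    omega
  · intro u v h
    show gL (u.2.val + 2 * u.1.val) ≠ gL (v.2.val + 2 * v.1.val)
    rcases openLadder_adj h with ⟨h1, h2⟩ | ⟨h1, h2⟩ | ⟨h1, h2, h3, h4⟩
    · rw [show v.2.val + 2 * v.1.val = (u.2.val + 2 * u.1.val) + 1 by omega]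
      exact gN1 _
    · rw [show u.2.val + 2 * u.1.val = (v.2.val + 2 * v.1.val) + 1 by omega]
      exact (gN1 _).symm
    · have hu := u.1.isLt
      have hv := v.1.isLt
      rcases (by omega : (u.1.val = 0 ∧ v.1.val = 1) ∨ (u.1.val = 1 ∧ v.1.val = 0))
        with ⟨ha, hb⟩ | ⟨ha, hb⟩
      · rw [show u.2.val + 2 * u.1.val = u.2.val by omega,
          show v.2.val + 2 * v.1.val = u.2.val + 2 by omega]
        exact gN2 _
      · rw [show v.2.val + 2 * v.1.val = v.2.val by omega,
          show u.2.val + 2 * u.1.val = v.2.val + 2 by omega]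
        exact (gN2 _).symm
  · intro u v w huv huw hvw
    have hu := u.1.isLt
    have hv := v.1.isLt
    have hw := w.1.isLt
    have hvw' : v.1.val ≠ w.1.val ∨ v.2.val ≠ w.2.val := by
      by_contra hh
      push_neg at hh
      exact hvw (Prod.ext_iff.mpr ⟨Fin.ext hh.1, Fin.ext hh.2⟩)
    show ((gL (u.2.val + 2 * u.1.val) : ℤ) - gL (v.2.val + 2 * v.1.val)).natAbs ≠
      ((gL (u.2.val + 2 * u.1.val) : ℤ) - gL (w.2.val + 2 * w.1.val)).natAbs
    rcases openLadder_adj huv with ⟨a1, a2⟩ | ⟨a1, a2⟩ | ⟨a1, a2, a3, a4⟩ <;>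
      rcases openLadder_adj huw with ⟨b1, b2⟩ | ⟨b1, b2⟩ | ⟨b1, b2, b3, b4⟩
    · omega  -- S,S impossible
    · -- S,P : use (gD1 (w.2 + 2r)).symm
      rw [show u.2.val + 2 * u.1.val = (w.2.val + 2 * u.1.val) + 1 by omega,
        show v.2.val + 2 * v.1.val = (w.2.val + 2 * u.1.val) + 2 by omega,
        show w.2.val + 2 * w.1.val = w.2.val + 2 * u.1.val by omega]
      exact (gD1 _).symm
    · -- S,R : split rows
      rcases (by omega : (u.1.val = 0 ∧ w.1.val = 1) ∨ (u.1.val = 1 ∧ w.1.val = 0))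
        with ⟨ha, hb⟩ | ⟨ha, hb⟩
      · rw [show u.2.val + 2 * u.1.val = (u.2.val - 1) + 1 by omega,
          show v.2.val + 2 * v.1.val = (u.2.val - 1) + 2 by omega,
          show w.2.val + 2 * w.1.val = (u.2.val - 1) + 3 by omega]
        exact gD3 _
      · rw [show u.2.val + 2 * u.1.val = u.2.val + 2 by omega,
          show v.2.val + 2 * v.1.val = u.2.val + 3 by omega,
          show w.2.val + 2 * w.1.val = u.2.val by omega]
        exact gE3 _
    · -- P,S
      rw [show u.2.val + 2 * u.1.val = (v.2.val + 2 * u.1.val) + 1 by omega,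
        show w.2.val + 2 * w.1.val = (v.2.val + 2 * u.1.val) + 2 by omega,
        show v.2.val + 2 * v.1.val = v.2.val + 2 * u.1.val by omega]
      exact gD1 _
    · omega  -- P,P impossible
    · -- P,R
      rcases (by omega : (u.1.val = 0 ∧ w.1.val = 1) ∨ (u.1.val = 1 ∧ w.1.val = 0))
        with ⟨ha, hb⟩ | ⟨ha, hb⟩
      · rw [show u.2.val + 2 * u.1.val = v.2.val + 1 by omega,
          show v.2.val + 2 * v.1.val = v.2.val by omega,
          show w.2.val + 2 * w.1.val = v.2.val + 3 by omega]
        exact gD2 _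
      · rw [show u.2.val + 2 * u.1.val = u.2.val + 2 by omega,
          show v.2.val + 2 * v.1.val = u.2.val + 1 by omega,
          show w.2.val + 2 * w.1.val = u.2.val by omega]
        exact gE2 _
    · -- R,S
      rcases (by omega : (u.1.val = 0 ∧ v.1.val = 1) ∨ (u.1.val = 1 ∧ v.1.val = 0))
        with ⟨ha, hb⟩ | ⟨ha, hb⟩
      · rw [show u.2.val + 2 * u.1.val = (u.2.val - 1) + 1 by omega,
          show w.2.val + 2 * w.1.val = (u.2.val - 1) + 2 by omega,
          show v.2.val + 2 * v.1.val = (u.2.val - 1) + 3 by omega]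
        exact (gD3 _).symm
      · rw [show u.2.val + 2 * u.1.val = u.2.val + 2 by omega,
          show w.2.val + 2 * w.1.val = u.2.val + 3 by omega,
          show v.2.val + 2 * v.1.val = u.2.val by omega]
        exact (gE3 _).symm
    · -- R,P
      rcases (by omega : (u.1.val = 0 ∧ v.1.val = 1) ∨ (u.1.val = 1 ∧ v.1.val = 0))
        with ⟨ha, hb⟩ | ⟨ha, hb⟩
      · rw [show u.2.val + 2 * u.1.val = w.2.val + 1 by omega,
          show w.2.val + 2 * w.1.val = w.2.val by omega,
          show v.2.val + 2 * v.1.val = w.2.val + 3 by omega]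
        exact (gD2 _).symm
      · rw [show u.2.val + 2 * u.1.val = u.2.val + 2 by omega,
          show w.2.val + 2 * w.1.val = u.2.val + 1 by omega,
          show v.2.val + 2 * v.1.val = u.2.val by omega]
        exact (gE2 _).symm
    · omega  -- R,R impossible

/- ## Lower bound -/

lemma deg3 {v a b c : ℕ}
    (bv : 1 ≤ v ∧ v ≤ 4) (ba : 1 ≤ a ∧ a ≤ 4) (bb : 1 ≤ b ∧ b ≤ 4) (bc : 1 ≤ c ∧ c ≤ 4)
    (ha : v ≠ a) (hb : v ≠ b) (hc : v ≠ c)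
    (d1 : ((v:ℤ)-a).natAbs ≠ ((v:ℤ)-b).natAbs)
    (d2 : ((v:ℤ)-a).natAbs ≠ ((v:ℤ)-c).natAbs)
    (d3 : ((v:ℤ)-b).natAbs ≠ ((v:ℤ)-c).natAbs) : v = 1 ∨ v = 4 := by
  omega

lemma final {x1 x2 y1 : ℕ} (h1 : x1 = 1 ∨ x1 = 4) (h2 : x2 = 1 ∨ x2 = 4)
    (h3 : y1 = 1 ∨ y1 = 4) (n1 : x1 ≠ x2) (n2 : x1 ≠ y1)
    (q3 : ((x1:ℤ)-x2).natAbs ≠ ((x1:ℤ)-y1).natAbs) : False := by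
  omega

lemma lower (n : ℕ) (hn : 3 < n) (k : ℕ) (f : Fin 2 × Fin n → ℕ)
    (hf : IsGracefulColoring (openLadder n) k f) : 5 ≤ k := by
  by_contra hk
  obtain ⟨hb, hp, hl⟩ := hf
  set x0 : Fin 2 × Fin n := ((0 : Fin 2), ⟨0, by omega⟩) with hx0
  set x1 : Fin 2 × Fin n := ((0 : Fin 2), ⟨1, by omega⟩) with hx1
  set x2 : Fin 2 × Fin n := ((0 : Fin 2), ⟨2, by omega⟩) with hx2
  set x3 : Fin 2 × Fin n := ((0 : Fin 2), ⟨3, by omega⟩) with hx3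
  set y0 : Fin 2 × Fin n := ((1 : Fin 2), ⟨0, by omega⟩) with hy0
  set y1 : Fin 2 × Fin n := ((1 : Fin 2), ⟨1, by omega⟩) with hy1
  set y2 : Fin 2 × Fin n := ((1 : Fin 2), ⟨2, by omega⟩) with hy2
  have a01 : (openLadder n).Adj x0 x1 := adj_rail 0 0 (by omega)
  have a12 : (openLadder n).Adj x1 x2 := adj_rail 0 1 (by omega)
  have a23 : (openLadder n).Adj x2 x3 := adj_rail 0 2 (by omega)
  have b01 : (openLadder n).Adj y0 y1 := adj_rail 1 0 (by omega)
  have b12 : (openLadder n).Adj y1 y2 := adj_rail 1 1 (by omega)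
  have r1 : (openLadder n).Adj x1 y1 := adj_rung 1 (by omega) (by omega) (by omega)
  have r2 : (openLadder n).Adj x2 y2 := adj_rung 2 (by omega) (by omega) (by omega)
  have ne02 : x0 ≠ x2 := by simp [hx0, hx2, Prod.ext_iff, Fin.ext_iff]
  have ne0y : x0 ≠ y1 := by simp [hx0, hy1, Prod.ext_iff, Fin.ext_iff]
  have ne2y : x2 ≠ y1 := by simp [hx2, hy1, Prod.ext_iff, Fin.ext_iff]
  have neb02 : y0 ≠ y2 := by simp [hy0, hy2, Prod.ext_iff, Fin.ext_iff]
  have neb0x : y0 ≠ x1 := by simp [hy0, hx1, Prod.ext_iff, Fin.ext_iff]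
  have neb2x : y2 ≠ x1 := by simp [hy2, hx1, Prod.ext_iff, Fin.ext_iff]
  have ne13 : x1 ≠ x3 := by simp [hx1, hx3, Prod.ext_iff, Fin.ext_iff]
  have ne1y : x1 ≠ y2 := by simp [hx1, hy2, Prod.ext_iff, Fin.ext_iff]
  have ne3y : x3 ≠ y2 := by simp [hx3, hy2, Prod.ext_iff, Fin.ext_iff]
  have B : ∀ v, 1 ≤ f v ∧ f v ≤ 4 := fun v => by have := hb v; omega
  have hx1v : f x1 = 1 ∨ f x1 = 4 :=
    deg3 (B x1) (B x0) (B x2) (B y1) (hp a01.symm) (hp a12) (hp r1)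
      (hl a01.symm a12 ne02) (hl a01.symm r1 ne0y) (hl a12 r1 ne2y)
  have hy1v : f y1 = 1 ∨ f y1 = 4 :=
    deg3 (B y1) (B y0) (B y2) (B x1) (hp b01.symm) (hp b12) (hp r1.symm)
      (hl b01.symm b12 neb02) (hl b01.symm r1.symm neb0x) (hl b12 r1.symm neb2x)
  have hx2v : f x2 = 1 ∨ f x2 = 4 :=
    deg3 (B x2) (B x1) (B x3) (B y2) (hp a12.symm) (hp a23) (hp r2)
      (hl a12.symm a23 ne13) (hl a12.symm r2 ne1y) (hl a23 r2 ne3y)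
  exact final hx1v hx2v hy1v (hp a12) (hp r1) (hl a12 r1 ne2y)

theorem gracefulChromaticNumber_openLadder (n : ℕ) (hn : 3 < n) :
    gracefulChromaticNumber (openLadder n) = 5 := by
  have hmem : 5 ∈ {k | ∃ f : Fin 2 × Fin n → ℕ, IsGracefulColoring (openLadder n) k f} :=
    ⟨_, upper_coloring n⟩
  refine le_antisymm (Nat.sInf_le hmem) (le_csInf ⟨5, hmem⟩ ?_)
  rintro k ⟨f, hf⟩
  exact lower n hn k f hf
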